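/- Let F be a field with char F ≠ 2, α ∈ F with α ∉ {0,1}, ζ ∈ F a root of x² − (4α−2)x + 1, μ = −(1+ζ)/4, ν = −(1+ζ⁻¹)/4, and in 𝔍(α) set s = (1/(4(α−1)))(μ𝔞 + 𝔞·𝔟 + ν𝔟) and t = (1/(α(α−1)))(ν𝔞 + 𝔞·𝔟 + μ𝔟). Let ξ ∈ F \ {0} and suppose 𝔠 = ξs + (1/2)·1 + ξ⁻¹t (where 1 = (2/(α−1))σ is the identity of 𝔍(α)) is a primitive axis of Jordan type 1/2 in 𝔍(α). Then its Miyamoto involution satisfies τ_𝔠(s) = ξ⁻²t and τ_𝔠(t) = ξ²s. -/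

import Mathlib

namespace JordanHalf

variable {F : Type*} [Field F] {A : Type*} [AddCommGroup A] [Module F A]

/-- The `lam`-eigenspace of the adjoint map `ad_a` for the bilinear multiplication `mul`. -/
def eig (mul : A →ₗ[F] A →ₗ[F] A) (a : A) (lam : F) : Submodule F A :=
  Module.End.eigenspace (mul a) lam

/-- `a` is a primitive axis of Jordan type `1/2` for the multiplication `mul`. -/
def IsPrimitiveAxis (mul : A →ₗ[F] A →ₗ[F] A) (a : A) : Prop :=
  mul a a = a ∧
  (eig mul a 1 ⊔ eig mul a 0 ⊔ eig mul a (2⁻¹ : F) = ⊤) ∧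
  eig mul a 1 = Submodule.span F {a} ∧
  (∀ x ∈ eig mul a 1, ∀ y ∈ eig mul a 0, mul x y = 0) ∧
  (∀ x ∈ eig mul a 0, ∀ y ∈ eig mul a 0, mul x y ∈ eig mul a 0) ∧
  (∀ x ∈ eig mul a 1, ∀ y ∈ eig mul a (2⁻¹ : F), mul x y ∈ eig mul a (2⁻¹ : F)) ∧
  (∀ x ∈ eig mul a 0, ∀ y ∈ eig mul a (2⁻¹ : F), mul x y ∈ eig mul a (2⁻¹ : F)) ∧
  (∀ x ∈ eig mul a (2⁻¹ : F), ∀ y ∈ eig mul a (2⁻¹ : F),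
    mul x y ∈ eig mul a 1 ⊔ eig mul a 0)

/-- The multiplication of the 3-dimensional algebra `𝔍(α)` with respect to the basis
`𝔞 = ![1,0,0]`, `𝔟 = ![0,1,0]`, `σ = ![0,0,1]`. -/
def JmulFun (α : F) (u v : Fin 3 → F) : Fin 3 → F :=
  ![u 0 * v 0 + (u 0 * v 1 + u 1 * v 0) / 2 + (α - 1) / 2 * (u 0 * v 2 + u 2 * v 0),
    u 1 * v 1 + (u 0 * v 1 + u 1 * v 0) / 2 + (α - 1) / 2 * (u 1 * v 2 + u 2 * v 1),
    (u 0 * v 1 + u 1 * v 0) + (α - 1) / 2 * (u 2 * v 2)]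

/-- The multiplication of `𝔍(α)` bundled as a bilinear map. -/
def Jmul (α : F) : (Fin 3 → F) →ₗ[F] (Fin 3 → F) →ₗ[F] (Fin 3 → F) :=
  LinearMap.mk₂ F (JmulFun α)
    (by intro m₁ m₂ n; funext i; fin_cases i <;>
      simp [JmulFun, Pi.add_apply] <;> ring)
    (by intro c m n; funext i; fin_cases i <;>
      simp [JmulFun, Pi.smul_apply, smul_eq_mul] <;> ring)
    (by intro m n₁ n₂; funext i; fin_cases i <;>
      simp [JmulFun, Pi.add_apply] <;> ring)
    (by intro c m n; funext i; fin_cases i <;>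
      simp [JmulFun, Pi.smul_apply, smul_eq_mul] <;> ring)

end JordanHalf

/-!
The elements `s` and `t` square to zero in `𝔍(α)`: both are multiples of `p𝔞 + 𝔞·𝔟 + q𝔟`
with `{p, q} = {μ, ν}` the two roots of `4x² + 4αx + α`. Hence for `x = ξs`, `y = ξ⁻¹t` the
element `c = x + ½·1 + y` satisfies `c·(x - y) = ½(x - y)`, so `τ` negates `x - y`; and it fixes
`x + y = c - ½·1` because it fixes `c ∈ A₁(c)` and `1 - c ∈ A₀(c)`. Thus `τ` swaps `x` and `y`.
-/

namespace JordanHalf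

section Axis

variable {F : Type*} [Field F] {A : Type*} [AddCommGroup A] [Module F A]
  (mul : A →ₗ[F] A →ₗ[F] A)

theorem mem_eig_one_of_mul_self {a : A} (ha : mul a a = a) : a ∈ eig mul a 1 := by
  rw [eig, Module.End.mem_eigenspace_iff, one_smul]
  exact ha

theorem sub_mem_eig_zero {a e : A} (ha : mul a a = a) (he : mul a e = a) :
    e - a ∈ eig mul a 0 := by
  rw [eig, Module.End.mem_eigenspace_iff, zero_smul, map_sub, he, ha, sub_self]

theorem sub_mem_eig_half {e x y : A} (hcomm : mul x y = mul y x) (he : ∀ z, mul e z = z)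
    (hx : mul x x = 0) (hy : mul y y = 0) :
    x - y ∈ eig mul (x + (2⁻¹ : F) • e + y) (2⁻¹ : F) := by
  rw [eig, Module.End.mem_eigenspace_iff]
  simp only [map_add, map_sub, map_smul, LinearMap.add_apply, LinearMap.smul_apply, he, hx, hy,
    hcomm]
  module

end Axis

theorem map_eq_and_map_eq_of_map_add_of_map_sub {F : Type*} [Field F] (hchar : (2 : F) ≠ 0)
    {M : Type*} [AddCommGroup M] [Module F M] (τ : M →ₗ[F] M) {x y : M}
    (hadd : τ (x + y) = x + y) (hsub : τ (x - y) = -(x - y)) : τ x = y ∧ τ y = x := by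
  have hx : (2 : F) • x = (x + y) + (x - y) := by module
  have hy : (2 : F) • y = (x + y) - (x - y) := by module
  constructor
  · refine smul_right_injective M hchar (?_ : (2 : F) • τ x = (2 : F) • y)
    rw [← map_smul, hx, map_add, hadd, hsub]; module
  · refine smul_right_injective M hchar (?_ : (2 : F) • τ y = (2 : F) • x)
    rw [← map_smul, hy, map_sub, hadd, hsub]; module

section Algebra

variable {F : Type*} [Field F]

theorem Jmul_comm (α : F) (u v : Fin 3 → F) : Jmul α u v = Jmul α v u := by
  funext i; fin_cases i <;> simp [Jmul, JmulFun] <;> ring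

theorem Jmul_one_left (hchar : (2 : F) ≠ 0) {α : F} (hα1 : α ≠ 1) (v : Fin 3 → F) :
    Jmul α ((2 / (α - 1)) • ![0, 0, 1]) v = v := by
  have hα1' : α - 1 ≠ 0 := sub_ne_zero.2 hα1
  funext i; fin_cases i <;> simp [Jmul, JmulFun] <;> field_simp

theorem Jmul_self_eq_zero (hchar : (2 : F) ≠ 0) {α p q : F} (hadd : p + q = -α)
    (hmul : 4 * (p * q) = α) :
    Jmul α (p • ![1, 0, 0] + JmulFun α ![1, 0, 0] ![0, 1, 0] + q • ![0, 1, 0])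
      (p • ![1, 0, 0] + JmulFun α ![1, 0, 0] ![0, 1, 0] + q • ![0, 1, 0]) = 0 := by
  funext i; fin_cases i <;> simp [Jmul, JmulFun] <;> field_simp
  · linear_combination 4 * (2 * p + 1) * hadd
  · linear_combination 4 * (2 * q + 1) * hadd
  · linear_combination 2 * hmul + 4 * hadd

end Algebra

theorem add_eq_neg_and_four_mul_eq_of_root {F : Type*} [Field F] (hchar : (2 : F) ≠ 0)
    {α ζ : F} (hζ : ζ ^ 2 - (4 * α - 2) * ζ + 1 = 0) :
    -(1 + ζ) / 4 + -(1 + ζ⁻¹) / 4 = -α ∧ 4 * (-(1 + ζ) / 4 * (-(1 + ζ⁻¹) / 4)) = α := by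
  have h4 : (4 : F) ≠ 0 := by
    rw [show (4 : F) = 2 * 2 by norm_num]; exact mul_ne_zero hchar hchar
  have hζ0 : ζ ≠ 0 := by rintro rfl; norm_num at hζ
  constructor <;> field_simp
  · linear_combination -hζ
  · linear_combination hζ

end JordanHalf

open JordanHalf

theorem miyamoto_action_on_J_general {F : Type*} [Field F] (hchar : (2 : F) ≠ 0)
    (α : F) (hα1 : α ≠ 1)
    (ζ : F) (hζ : ζ ^ 2 - (4 * α - 2) * ζ + 1 = 0)
    (μ ν : F) (hμ : μ = -(1 + ζ) / 4) (hν : ν = -(1 + ζ⁻¹) / 4)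
    (s t oneJ : Fin 3 → F)
    (hs : s = (4 * (α - 1))⁻¹ • (μ • ![1, 0, 0] + JmulFun α ![1, 0, 0] ![0, 1, 0] +
      ν • ![0, 1, 0]))
    (ht : t = (α * (α - 1))⁻¹ • (ν • ![1, 0, 0] + JmulFun α ![1, 0, 0] ![0, 1, 0] +
      μ • ![0, 1, 0]))
    (hone : oneJ = (2 / (α - 1)) • ![0, 0, 1])
    (ξ : F) (hξ : ξ ≠ 0) (c : Fin 3 → F)
    (hc : c = ξ • s + (2⁻¹ : F) • oneJ + ξ⁻¹ • t)
    (haxis : IsPrimitiveAxis (Jmul α) c)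
    (τ : (Fin 3 → F) →ₗ[F] (Fin 3 → F))
    (hτ1 : ∀ x ∈ eig (Jmul α) c 1, τ x = x)
    (hτ0 : ∀ x ∈ eig (Jmul α) c 0, τ x = x)
    (hτhalf : ∀ x ∈ eig (Jmul α) c (2⁻¹ : F), τ x = -x) :
    τ s = (ξ⁻¹) ^ 2 • t ∧ τ t = ξ ^ 2 • s := by
  obtain ⟨hadd, hmul⟩ := add_eq_neg_and_four_mul_eq_of_root hchar hζ
  rw [← hμ, ← hν] at hadd hmul
  have hs2 : Jmul α (ξ • s) (ξ • s) = 0 := by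
    simp only [hs, map_smul, LinearMap.smul_apply, smul_zero, Jmul_self_eq_zero hchar hadd hmul]
  have ht2 : Jmul α (ξ⁻¹ • t) (ξ⁻¹ • t) = 0 := by
    simp only [ht, map_smul, LinearMap.smul_apply, smul_zero,
      Jmul_self_eq_zero hchar (add_comm μ ν ▸ hadd) (mul_comm μ ν ▸ hmul)]
  have hunit : ∀ v, Jmul α oneJ v = v := hone ▸ Jmul_one_left hchar hα1
  have hτc : τ c = c := hτ1 c (mem_eig_one_of_mul_self _ haxis.1)
  have hτone : τ oneJ = oneJ := by
    have h := hτ0 _ (sub_mem_eig_zero _ haxis.1 (by rw [Jmul_comm, hunit]))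
    rwa [map_sub, hτc, sub_left_inj] at h
  have hτadd : τ (ξ • s + ξ⁻¹ • t) = ξ • s + ξ⁻¹ • t := by
    rw [show ξ • s + ξ⁻¹ • t = c - (2⁻¹ : F) • oneJ by rw [hc]; abel, map_sub, map_smul, hτc,
      hτone]
  have hτsub := hτhalf _ (hc ▸ sub_mem_eig_half _ (Jmul_comm α _ _) hunit hs2 ht2)
  obtain ⟨hτs, hτt⟩ := map_eq_and_map_eq_of_map_add_of_map_sub hchar τ hτadd hτsub
  rw [map_smul] at hτs hτt
  constructor
  · rw [← inv_smul_smul₀ hξ (τ s), hτs, smul_smul, sq]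
  · rw [← smul_inv_smul₀ hξ (τ t), hτt, smul_smul, sq]

/-- **Lemma (action on J).** In `𝔍(α)` with `α ∉ {0,1}`, `ζ` a root of
`x² − (4α−2)x + 1`, `μ = −(1+ζ)/4`, `ν = −(1+ζ⁻¹)/4`,
`s = (1/(4(α−1)))(μ𝔞 + 𝔞⬝𝔟 + ν𝔟)`, `t = (1/(α(α−1)))(ν𝔞 + 𝔞⬝𝔟 + μ𝔟)`, and identity
`1 = (2/(α−1))σ`: if `𝔠 = ξs + ½·1 + ξ⁻¹t` (with `ξ ≠ 0`) is a primitive axis of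
Jordan type `1/2`, then its Miyamoto involution `τ` satisfies `τ(s) = ξ⁻²t` and
`τ(t) = ξ²s`. -/
theorem miyamoto_action_on_J {F : Type*} [Field F] (hchar : (2 : F) ≠ 0)
    (α : F) (hα0 : α ≠ 0) (hα1 : α ≠ 1)
    (ζ : F) (hζ : ζ ^ 2 - (4 * α - 2) * ζ + 1 = 0)
    (μ ν : F) (hμ : μ = -(1 + ζ) / 4) (hν : ν = -(1 + ζ⁻¹) / 4)
    (s t oneJ : Fin 3 → F)
    (hs : s = (4 * (α - 1))⁻¹ • (μ • ![1, 0, 0] + JmulFun α ![1, 0, 0] ![0, 1, 0] +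
      ν • ![0, 1, 0]))
    (ht : t = (α * (α - 1))⁻¹ • (ν • ![1, 0, 0] + JmulFun α ![1, 0, 0] ![0, 1, 0] +
      μ • ![0, 1, 0]))
    (hone : oneJ = (2 / (α - 1)) • ![0, 0, 1])
    (ξ : F) (hξ : ξ ≠ 0) (c : Fin 3 → F)
    (hc : c = ξ • s + (2⁻¹ : F) • oneJ + ξ⁻¹ • t)
    (haxis : IsPrimitiveAxis (Jmul α) c)
    (τ : (Fin 3 → F) →ₗ[F] (Fin 3 → F))
    (hτ1 : ∀ x ∈ eig (Jmul α) c 1, τ x = x)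
    (hτ0 : ∀ x ∈ eig (Jmul α) c 0, τ x = x)
    (hτhalf : ∀ x ∈ eig (Jmul α) c (2⁻¹ : F), τ x = -x) :
    τ s = (ξ⁻¹) ^ 2 • t ∧ τ t = ξ ^ 2 • s :=
  miyamoto_action_on_J_general hchar α hα1 ζ hζ μ ν hμ hν s t oneJ hs ht hone ξ hξ c hc haxis τ hτ1
    hτ0 hτhalf
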